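/- Let F be ℝ or ℂ, and let g and g' be n-dimensional Lie algebras over F possessing abelian ideals u ⊆ g and u' ⊆ g' of codimension one. Fix e ∈ g∖u and e' ∈ g'∖u'. Then g and g' are isomorphic as Lie algebras if and only if there exist γ ∈ F∖{0} and a linear isomorphism ψ : u → u' such that ψ ∘ (ad e)|_u = γ · ((ad e')|_{u'}) ∘ ψ, i.e. (ad e)|_u is conjugate to γ·(ad e')|_{u'}. -/

import Mathlib

/-!
Write `L = u ⊕ F e`. As `u` is abelian, `⁅p + s • e, q + t • e⁆ = s • ⁅e, q⁆ - t • ⁅e, p⁆` for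
`p, q ∈ u`, so the bracket of `L` is determined by `(ad e)|_u`, and a conjugacy
`ψ ∘ (ad e)|_u = γ • (ad e')|_{u'} ∘ ψ` extends to the Lie isomorphism `p + t • e ↦ ψ p + γ t • e'`.

Conversely, pulling `u'` back along an isomorphism reduces the claim to two abelian ideals
`u₁, u₂` of codimension one in the same `L`. If `u₁ = u₂`, then `e₂ ≡ t • e₁` modulo `u₁`, so
`(ad e₂)|_{u₁} = t • (ad e₁)|_{u₁}`. If `u₁ ≠ u₂`, they span `L`, which is then two-step
nilpotent: both restricted operators square to zero and have the same image `⁅L, L⁆`, and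
square-zero operators of equal rank on spaces of equal dimension are conjugate.
-/

open Module LinearMap LieModule

section

variable {F : Type*} [Field F]

namespace LinearMap

variable {V W X : Type*} [AddCommGroup V] [Module F V] [AddCommGroup W] [Module F W]
  [AddCommGroup X] [Module F X]

/-- For `f ∘ₗ f = 0`, `C` a complement of `ker f` and `K` a complement of `range f` in `ker f`,
this is an isomorphism in whose coordinates `f` acts as `(a, b, k) ↦ (0, a, 0)`. -/
def sqZeroNormalForm (f : V →ₗ[F] V) (C : Submodule F V) (K : Submodule F (ker f)) :
    C × C × K →ₗ[F] V :=
  C.subtype.coprod ((f ∘ₗ C.subtype).coprod ((ker f).subtype ∘ₗ K.subtype))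

theorem sqZeroNormalForm_apply (f : V →ₗ[F] V) (C : Submodule F V) (K : Submodule F (ker f))
    (x : C × C × K) : sqZeroNormalForm f C K x = x.1 + f x.2.1 + x.2.2 := by
  simp [sqZeroNormalForm, add_assoc]

theorem injective_sqZeroNormalForm {f : V →ₗ[F] V} (hf : f ∘ₗ f = 0) {C : Submodule F V}
    {K : Submodule F (ker f)} (hC : Disjoint (ker f) C)
    (hK : Disjoint ((range f).comap (ker f).subtype) K) :
    Function.Injective (sqZeroNormalForm f C K) := by
  rw [← ker_eq_bot, ker_eq_bot']
  rintro ⟨a, b, k⟩ h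
  rw [sqZeroNormalForm_apply] at h
  have ha : a = 0 := by
    have hfa : f a = 0 := by
      have hfb : f (f b) = 0 := LinearMap.congr_fun hf b
      simpa [hfb, (k : ker f).2] using congr_arg f h
    exact Subtype.ext (Submodule.disjoint_def.mp hC _ hfa a.2)
  rw [ha, ZeroMemClass.coe_zero, zero_add] at h
  have hk : k = 0 := by
    have hkr : (k : ker f) ∈ (range f).comap (ker f).subtype :=
      ⟨-(b : V), by rw [map_neg]; exact (eq_neg_of_add_eq_zero_right h).symm⟩
    exact Subtype.ext (Submodule.disjoint_def.mp hK _ hkr k.2)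
  have hb : b = 0 := by
    have hfb : f b = 0 := by simpa [hk] using h
    exact Subtype.ext (Submodule.disjoint_def.mp hC _ hfb b.2)
  simp [ha, hb, hk]

theorem apply_sqZeroNormalForm {f : V →ₗ[F] V} (hf : f ∘ₗ f = 0) (C : Submodule F V)
    (K : Submodule F (ker f)) (x : C × C × K) :
    f (sqZeroNormalForm f C K x) = sqZeroNormalForm f C K (0, x.1, 0) := by
  have hff : f (f x.2.1) = 0 := LinearMap.congr_fun hf x.2.1
  simp [sqZeroNormalForm_apply, hff]

theorem exists_bijective_sqZeroNormalForm [FiniteDimensional F V] {f : V →ₗ[F] V}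
    (hf : f ∘ₗ f = 0) :
    ∃ (C : Submodule F V) (K : Submodule F (ker f)), finrank F C = finrank F (range f) ∧
      finrank F C + finrank F C + finrank F K = finrank F V ∧
      Function.Bijective (sqZeroNormalForm f C K) := by
  have hRK : range f ≤ ker f := by
    rintro _ ⟨v, rfl⟩
    exact LinearMap.congr_fun hf v
  obtain ⟨C, hC⟩ := (ker f).exists_isCompl
  obtain ⟨K, hK⟩ := ((range f).comap (ker f).subtype).exists_isCompl
  have h₁ := Submodule.finrank_add_eq_of_isCompl hC
  have h₂ := Submodule.finrank_add_eq_of_isCompl hK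
  have h₃ := (Submodule.comapSubtypeEquivOfLe hRK).finrank_eq
  have h₄ := f.finrank_range_add_finrank_ker
  have hinj := injective_sqZeroNormalForm hf hC.disjoint hK.disjoint
  refine ⟨C, K, by omega, by omega, hinj, ?_⟩
  refine (injective_iff_surjective_of_finrank_eq_finrank ?_).mp hinj
  simp only [Module.finrank_prod]
  omega

theorem exists_conj_of_sq_eq_zero [FiniteDimensional F V] [FiniteDimensional F W]
    {f : V →ₗ[F] V} {g : W →ₗ[F] W} (hf : f ∘ₗ f = 0) (hg : g ∘ₗ g = 0)
    (hdim : finrank F V = finrank F W) (hrank : finrank F (range f) = finrank F (range g)) :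
    ∃ ψ : V ≃ₗ[F] W, ∀ v, ψ (f v) = g (ψ v) := by
  obtain ⟨C, K, hCf, hdf, hΦ⟩ := exists_bijective_sqZeroNormalForm hf
  obtain ⟨C', K', hCg, hdg, hΦ'⟩ := exists_bijective_sqZeroNormalForm hg
  let Φ := LinearEquiv.ofBijective _ hΦ
  let Φ' := LinearEquiv.ofBijective _ hΦ'
  let ψC : C ≃ₗ[F] C' := LinearEquiv.ofFinrankEq _ _ (by omega)
  let ψK : K ≃ₗ[F] K' := LinearEquiv.ofFinrankEq _ _ (by omega)
  refine ⟨Φ.symm.trans ((ψC.prodCongr (ψC.prodCongr ψK)).trans Φ'), fun v => ?_⟩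
  obtain ⟨x, rfl⟩ := Φ.surjective v
  simp [Φ, Φ', apply_sqZeroNormalForm hf, apply_sqZeroNormalForm hg]

def IsConjUpToScalar (f : V →ₗ[F] V) (g : W →ₗ[F] W) : Prop :=
  ∃ γ : F, γ ≠ 0 ∧ ∃ ψ : V ≃ₗ[F] W, ∀ x, ψ (f x) = γ • g (ψ x)

theorem IsConjUpToScalar.trans {f : V →ₗ[F] V} {g : W →ₗ[F] W} {h : X →ₗ[F] X}
    (hfg : IsConjUpToScalar f g) (hgh : IsConjUpToScalar g h) : IsConjUpToScalar f h := by
  obtain ⟨γ, hγ, ψ, hψ⟩ := hfg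
  obtain ⟨δ, hδ, χ, hχ⟩ := hgh
  refine ⟨γ * δ, mul_ne_zero hγ hδ, ψ.trans χ, fun x => ?_⟩
  simp [hψ, hχ, mul_smul]

theorem isConjUpToScalar_of_conj {f : V →ₗ[F] V} {g : W →ₗ[F] W} (ψ : V ≃ₗ[F] W)
    (hψ : ∀ x, ψ (f x) = g (ψ x)) : IsConjUpToScalar f g :=
  ⟨1, one_ne_zero, ψ, by simpa using hψ⟩

theorem isConjUpToScalar_of_eq_smul {f g : V →ₗ[F] V} {γ : F} (hγ : γ ≠ 0) (h : f = γ • g) :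
    IsConjUpToScalar f g :=
  ⟨γ, hγ, LinearEquiv.refl F V, by simp [h]⟩

end LinearMap

theorem Submodule.sup_eq_top_of_not_le {V : Type*} [AddCommGroup V] [Module F V]
    [FiniteDimensional F V] {p q : Submodule F V} (hp : finrank F p + 1 = finrank F V)
    (hqp : ¬ q ≤ p) : p ⊔ q = ⊤ := by
  apply Submodule.eq_top_of_finrank_eq
  have hlt : p < p ⊔ q := lt_of_le_of_ne le_sup_left fun h => hqp (h ▸ le_sup_right)
  have := Submodule.finrank_lt_finrank_of_lt hlt
  have := (p ⊔ q).finrank_le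
  omega

noncomputable def Submodule.prodEquivOfFinrankAddOne {V : Type*} [AddCommGroup V] [Module F V]
    [FiniteDimensional F V] (p : Submodule F V) (hp : finrank F p + 1 = finrank F V) {e : V}
    (he : e ∉ p) : (p × F) ≃ₗ[F] V :=
  LinearEquiv.ofBijective (p.subtype.coprod (toSpanSingleton F V e)) <| by
    have hsurj : Function.Surjective (p.subtype.coprod (toSpanSingleton F V e)) := by
      rw [← range_eq_top, range_coprod, Submodule.range_subtype, range_toSpanSingleton]
      exact Submodule.sup_eq_top_of_not_le hp (by simpa [Submodule.span_singleton_le_iff_mem])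
    refine ⟨(injective_iff_surjective_of_finrank_eq_finrank ?_).mpr hsurj, hsurj⟩
    simp [hp]

@[simp]
theorem Submodule.prodEquivOfFinrankAddOne_apply {V : Type*} [AddCommGroup V] [Module F V]
    [FiniteDimensional F V] (p : Submodule F V) (hp : finrank F p + 1 = finrank F V) {e : V}
    (he : e ∉ p) (x : p × F) : p.prodEquivOfFinrankAddOne hp he x = x.1 + x.2 • e := rfl

namespace LieIdeal

variable {L L' : Type*} [LieRing L] [LieAlgebra F L] [LieRing L'] [LieAlgebra F L']

theorem lie_mem_of_sup_eq_top {u₁ u₂ : LieIdeal F L} (hu₁ : ∀ x ∈ u₁, ∀ y ∈ u₁, ⁅x, y⁆ = 0)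
    (hsup : u₁ ⊔ u₂ = ⊤) (y : L) {z : L} (hz : z ∈ u₁) : ⁅y, z⁆ ∈ u₂ := by
  obtain ⟨a, ha, b, hb, rfl⟩ := (LieSubmodule.mem_sup _ _ y).mp (hsup ▸ LieSubmodule.mem_top y)
  rw [add_lie, hu₁ a ha z hz, zero_add]
  exact lie_mem_left F L u₂ b z hb

theorem lie_eq_zero_of_mem_inf {u₁ u₂ : LieIdeal F L} (hu₁ : ∀ x ∈ u₁, ∀ y ∈ u₁, ⁅x, y⁆ = 0)
    (hu₂ : ∀ x ∈ u₂, ∀ y ∈ u₂, ⁅x, y⁆ = 0) (hsup : u₁ ⊔ u₂ = ⊤) (x : L) {z : L}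
    (hz₁ : z ∈ u₁) (hz₂ : z ∈ u₂) : ⁅x, z⁆ = 0 := by
  obtain ⟨a, ha, b, hb, rfl⟩ := (LieSubmodule.mem_sup _ _ x).mp (hsup ▸ LieSubmodule.mem_top x)
  rw [add_lie, hu₁ a ha z hz₁, hu₂ b hb z hz₂, add_zero]

theorem lie_lie_eq_zero_of_sup_eq_top {u₁ u₂ : LieIdeal F L}
    (hu₁ : ∀ x ∈ u₁, ∀ y ∈ u₁, ⁅x, y⁆ = 0) (hu₂ : ∀ x ∈ u₂, ∀ y ∈ u₂, ⁅x, y⁆ = 0)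
    (hsup : u₁ ⊔ u₂ = ⊤) (x y z : L) : ⁅x, ⁅y, z⁆⁆ = 0 := by
  obtain ⟨z₁, hz₁, z₂, hz₂, rfl⟩ := (LieSubmodule.mem_sup _ _ z).mp (hsup ▸ LieSubmodule.mem_top z)
  have hsup' : u₂ ⊔ u₁ = ⊤ := sup_comm u₁ u₂ ▸ hsup
  have h₁ := lie_eq_zero_of_mem_inf hu₁ hu₂ hsup x (u₁.lie_mem hz₁)
    (lie_mem_of_sup_eq_top hu₁ hsup y hz₁)
  have h₂ := lie_eq_zero_of_mem_inf hu₁ hu₂ hsup x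
    (lie_mem_of_sup_eq_top hu₂ hsup' y hz₂) (u₂.lie_mem hz₂)
  rw [lie_add, lie_add, h₁, h₂, add_zero]

def comapEquiv (φ : L ≃ₗ⁅F⁆ L') (u : LieIdeal F L') : comap φ.toLieHom u ≃ₗ[F] u :=
  φ.toLinearEquiv.ofSubmodules _ _ (Submodule.map_comap_eq_of_surjective φ.surjective _)

@[simp]
theorem coe_comapEquiv_apply (φ : L ≃ₗ⁅F⁆ L') (u : LieIdeal F L') (x : comap φ.toLieHom u) :
    (comapEquiv φ u x : L') = φ x := rfl

theorem isConjUpToScalar_toEnd_comap (φ : L ≃ₗ⁅F⁆ L') (u : LieIdeal F L') (e : L') :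
    IsConjUpToScalar (toEnd F L (comap φ.toLieHom u) (φ.symm e)) (toEnd F L' u e) :=
  isConjUpToScalar_of_conj (comapEquiv φ u) fun x => Subtype.ext <| by simp [LieEquiv.map_lie]

variable [FiniteDimensional F L]

theorem lie_prodEquivOfFinrankAddOne {u : LieIdeal F L}
    (hu : ∀ x ∈ u, ∀ y ∈ u, ⁅x, y⁆ = 0) (hcodim : finrank F u + 1 = finrank F L) {e : L}
    (he : e ∉ u) (x y : u × F) :
    ⁅u.prodEquivOfFinrankAddOne hcodim he x, u.prodEquivOfFinrankAddOne hcodim he y⁆ =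
      u.prodEquivOfFinrankAddOne hcodim he (toEnd F L u e (x.2 • y.1 - y.2 • x.1), 0) := by
  obtain ⟨⟨p, hp⟩, s⟩ := x
  obtain ⟨⟨q, hq⟩, t⟩ := y
  have hpe : ⁅p, e⁆ = -⁅e, p⁆ := (lie_skew p e).symm
  simp only [Submodule.prodEquivOfFinrankAddOne_apply, toEnd_apply_apply,
    LieSubmodule.coe_bracket, zero_smul, add_zero, lie_add, add_lie, lie_smul, smul_lie,
    hu p hp q hq, lie_self, hpe]
  push_cast
  rw [lie_sub, lie_smul, lie_smul]
  module

theorem lie_mem_range_toEnd {u : LieIdeal F L} (hu : ∀ x ∈ u, ∀ y ∈ u, ⁅x, y⁆ = 0)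
    (hcodim : finrank F u + 1 = finrank F L) {e : L} (he : e ∉ u) (a b : L) :
    ⁅a, b⁆ ∈ range (u.toSubmodule.subtype ∘ₗ toEnd F L u e) := by
  obtain ⟨x, rfl⟩ := (u.prodEquivOfFinrankAddOne hcodim he).surjective a
  obtain ⟨y, rfl⟩ := (u.prodEquivOfFinrankAddOne hcodim he).surjective b
  rw [lie_prodEquivOfFinrankAddOne hu hcodim he]
  exact ⟨x.2 • y.1 - y.2 • x.1, by simp⟩

theorem isConjUpToScalar_toEnd_of_notMem {u : LieIdeal F L}
    (hu : ∀ x ∈ u, ∀ y ∈ u, ⁅x, y⁆ = 0) (hcodim : finrank F u + 1 = finrank F L) {e₁ e₂ : L}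
    (he₁ : e₁ ∉ u) (he₂ : e₂ ∉ u) : IsConjUpToScalar (toEnd F L u e₁) (toEnd F L u e₂) := by
  obtain ⟨⟨p, t⟩, rfl⟩ := (u.prodEquivOfFinrankAddOne hcodim he₁).surjective e₂
  have ht : t ≠ 0 := by
    rintro rfl
    simp at he₂
  refine isConjUpToScalar_of_eq_smul (inv_ne_zero ht) ?_
  ext x
  simp [hu p p.2 x x.2, smul_smul, ht]

theorem isConjUpToScalar_toEnd_of_ne {u₁ u₂ : LieIdeal F L}
    (hu₁ : ∀ x ∈ u₁, ∀ y ∈ u₁, ⁅x, y⁆ = 0) (hu₂ : ∀ x ∈ u₂, ∀ y ∈ u₂, ⁅x, y⁆ = 0)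
    (hcodim₁ : finrank F u₁ + 1 = finrank F L) (hcodim₂ : finrank F u₂ + 1 = finrank F L)
    {e₁ e₂ : L} (he₁ : e₁ ∉ u₁) (he₂ : e₂ ∉ u₂) (hne : u₁ ≠ u₂) :
    IsConjUpToScalar (toEnd F L u₁ e₁) (toEnd F L u₂ e₂) := by
  have hsup : u₁ ⊔ u₂ = ⊤ := by
    rw [← LieSubmodule.toSubmodule_eq_top, LieSubmodule.sup_toSubmodule]
    refine Submodule.sup_eq_top_of_not_le hcodim₁ fun hle => hne ?_
    exact ((LieSubmodule.toSubmodule_inj _ _).mp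
      (Submodule.eq_of_le_of_finrank_eq hle (show finrank F u₂ = finrank F u₁ by omega))).symm
  have hsq : ∀ (u : LieIdeal F L) (e : L), toEnd F L u e ∘ₗ toEnd F L u e = 0 := fun u e => by
    ext x
    exact lie_lie_eq_zero_of_sup_eq_top hu₁ hu₂ hsup e e x
  have hrange : range (u₁.toSubmodule.subtype ∘ₗ toEnd F L u₁ e₁) =
      range (u₂.toSubmodule.subtype ∘ₗ toEnd F L u₂ e₂) := by
    apply le_antisymm
    · rintro _ ⟨x, rfl⟩
      exact lie_mem_range_toEnd hu₂ hcodim₂ he₂ e₁ x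
    · rintro _ ⟨x, rfl⟩
      exact lie_mem_range_toEnd hu₁ hcodim₁ he₁ e₂ x
  have hrank : finrank F (range (toEnd F L u₁ e₁)) = finrank F (range (toEnd F L u₂ e₂)) := by
    have hcomp : ∀ (u : LieIdeal F L) (e : L), finrank F (range (toEnd F L u e)) =
        finrank F (range (u.toSubmodule.subtype ∘ₗ toEnd F L u e)) := fun u e => by
      rw [range_comp, Submodule.finrank_map_subtype_eq]; rfl
    rw [hcomp, hcomp, hrange]
  obtain ⟨ψ, hψ⟩ := exists_conj_of_sq_eq_zero (hsq u₁ e₁) (hsq u₂ e₂) (by omega) hrank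
  exact isConjUpToScalar_of_conj ψ hψ

theorem isConjUpToScalar_toEnd {u₁ u₂ : LieIdeal F L}
    (hu₁ : ∀ x ∈ u₁, ∀ y ∈ u₁, ⁅x, y⁆ = 0) (hu₂ : ∀ x ∈ u₂, ∀ y ∈ u₂, ⁅x, y⁆ = 0)
    (hcodim₁ : finrank F u₁ + 1 = finrank F L) (hcodim₂ : finrank F u₂ + 1 = finrank F L)
    {e₁ e₂ : L} (he₁ : e₁ ∉ u₁) (he₂ : e₂ ∉ u₂) :
    IsConjUpToScalar (toEnd F L u₁ e₁) (toEnd F L u₂ e₂) := by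
  by_cases h : u₁ = u₂
  · subst h
    exact isConjUpToScalar_toEnd_of_notMem hu₁ hcodim₁ he₁ he₂
  · exact isConjUpToScalar_toEnd_of_ne hu₁ hu₂ hcodim₁ hcodim₂ he₁ he₂ h

theorem isConjUpToScalar_toEnd_of_lieEquiv (φ : L ≃ₗ⁅F⁆ L')
    {u : LieIdeal F L} {u' : LieIdeal F L'} (hu : ∀ x ∈ u, ∀ y ∈ u, ⁅x, y⁆ = 0)
    (hu' : ∀ x ∈ u', ∀ y ∈ u', ⁅x, y⁆ = 0) (hcodim : finrank F u + 1 = finrank F L)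
    (hcodim' : finrank F u' + 1 = finrank F L') {e : L} {e' : L'} (he : e ∉ u) (he' : e' ∉ u') :
    IsConjUpToScalar (toEnd F L u e) (toEnd F L' u' e') := by
  have hv : ∀ x ∈ comap φ.toLieHom u', ∀ y ∈ comap φ.toLieHom u', ⁅x, y⁆ = 0 := by
    intro x hx y hy
    apply φ.injective
    simpa using hu' _ hx _ hy
  have hcodim_v : finrank F (comap φ.toLieHom u') + 1 = finrank F L := by
    rw [(comapEquiv φ u').finrank_eq, hcodim', φ.toLinearEquiv.finrank_eq]
  have he_v : φ.symm e' ∉ comap φ.toLieHom u' := by simpa using he'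
  exact (isConjUpToScalar_toEnd hu hv hcodim hcodim_v he he_v).trans
    (isConjUpToScalar_toEnd_comap φ u' e')

theorem nonempty_lieEquiv_of_isConjUpToScalar [FiniteDimensional F L']
    {u : LieIdeal F L} {u' : LieIdeal F L'} (hu : ∀ x ∈ u, ∀ y ∈ u, ⁅x, y⁆ = 0)
    (hu' : ∀ x ∈ u', ∀ y ∈ u', ⁅x, y⁆ = 0) (hcodim : finrank F u + 1 = finrank F L)
    (hcodim' : finrank F u' + 1 = finrank F L') {e : L} {e' : L'} (he : e ∉ u) (he' : e' ∉ u')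
    (h : IsConjUpToScalar (toEnd F L u e) (toEnd F L' u' e')) : Nonempty (L ≃ₗ⁅F⁆ L') := by
  obtain ⟨γ, hγ, ψ, hψ⟩ := h
  let Φ := u.prodEquivOfFinrankAddOne hcodim he
  let Φ' := u'.prodEquivOfFinrankAddOne hcodim' he'
  let φ : L ≃ₗ[F] L' :=
    Φ.symm.trans ((ψ.prodCongr (LinearEquiv.smulOfNeZero F F γ hγ)).trans Φ')
  refine ⟨{ φ with map_lie' := fun {x y} => ?_ }⟩
  obtain ⟨x, rfl⟩ := Φ.surjective x
  obtain ⟨y, rfl⟩ := Φ.surjective y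
  have hφ : ∀ z, φ (Φ z) = Φ' (ψ z.1, γ • z.2) := fun z => by simp [φ]
  change φ ⁅Φ x, Φ y⁆ = ⁅φ (Φ x), φ (Φ y)⁆
  rw [lie_prodEquivOfFinrankAddOne hu hcodim he, hφ, hφ, hφ,
    lie_prodEquivOfFinrankAddOne hu' hcodim' he', hψ]
  congr 1
  ext <;> simp [smul_sub, smul_smul]

end LieIdeal

end

/-- Let `F ∈ {ℝ, ℂ}` and let `g, g'` be `n`-dimensional Lie algebras over
`F` with abelian ideals `u ⊆ g`, `u' ⊆ g'` of codimension one.  Fix `e ∈ g ∖ u` and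
`e' ∈ g' ∖ u'`.  Then `g ≅ g'` as Lie algebras iff there are `γ ∈ F ∖ {0}` and a linear
isomorphism `ψ : u → u'` with `ψ ∘ (ad e)|_u = γ • ((ad e')|_{u'}) ∘ ψ`. -/
theorem stmt2 {F : Type*} [RCLike F] {g g' : Type*}
    [LieRing g] [LieAlgebra F g] [LieRing g'] [LieAlgebra F g']
    [FiniteDimensional F g] [FiniteDimensional F g'] (n : ℕ)
    (hg : finrank F g = n) (hg' : finrank F g' = n)
    (u : LieIdeal F g) (u' : LieIdeal F g')
    (hu : ∀ x ∈ u, ∀ y ∈ u, ⁅x, y⁆ = (0 : g))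
    (hu' : ∀ x ∈ u', ∀ y ∈ u', ⁅x, y⁆ = (0 : g'))
    (hcu : finrank F ↥u + 1 = n) (hcu' : finrank F ↥u' + 1 = n)
    (e : g) (he : e ∉ u) (e' : g') (he' : e' ∉ u') :
    Nonempty (g ≃ₗ⁅F⁆ g') ↔
      ∃ γ : F, γ ≠ 0 ∧ ∃ ψ : ↥u ≃ₗ[F] ↥u',
        ∀ x : ↥u,
          ψ ⟨⁅e, (x : g)⁆, u.lie_mem x.2⟩ =
            γ • (⟨⁅e', (ψ x : g')⁆, u'.lie_mem (ψ x).2⟩ : ↥u') := by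
  have hcodim : finrank F u + 1 = finrank F g := hcu.trans hg.symm
  have hcodim' : finrank F u' + 1 = finrank F g' := hcu'.trans hg'.symm
  show _ ↔ IsConjUpToScalar (toEnd F g u e) (toEnd F g' u' e')
  exact ⟨fun ⟨φ⟩ => LieIdeal.isConjUpToScalar_toEnd_of_lieEquiv φ hu hu' hcodim hcodim' he he',
    LieIdeal.nonempty_lieEquiv_of_isConjUpToScalar hu hu' hcodim hcodim' he he'⟩
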